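/- arXiv:2103.01081 — 3 statements merged into one kernel-verified Lean document; each statement's English description precedes it below -/
import Mathlib

section
/- In the n-rank Taft algebra 𝒜̄_q(n), the antipode satisfies s(x^γ) = (-1)^{|γ|} q^{-⟨γ,γ+𝟏⟩/2} x^γ K(-γ), and consequently s²(x^γ) = q^{-|γ|} x^γ, where |γ| = Σ_i γ_i, 𝟏 = (1,…,1), and ⟨·,·⟩ is the standard symmetric bilinear form on ℤ^n. -/
open scoped TensorProduct

def starForm {n : ℕ} (α β : Fin n → ℤ) : ℤ :=
  ∑ j : Fin n, ∑ i : Fin n, if (j : ℕ) < (i : ℕ) then α i * β j else 0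

noncomputable def theta {k : Type*} [Field k] (q : k) {n : ℕ} (α β : Fin n → ℤ) : k :=
  q ^ (starForm α β - starForm β α)

def epsZ {n : ℕ} (i : Fin n) : Fin n → ℤ := fun j => if j = i then 1 else 0

/-- The ordered monomial `x^γ = x_1^{γ_1} ⋯ x_n^{γ_n}` built from a family `x`. -/
def xpow {A : Type*} [Ring A] {n : ℕ} (x : Fin n → A) (γ : Fin n → ℕ) : A :=
  ((List.finRange n).map (fun i => x i ^ γ i)).prod

/-- A presentation of the `n`-rank Taft algebra inside a Hopf algebra `A`
(generators `K(α)`, `x_i` and the defining relations, together with the values of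
the comultiplication, counit and antipode on the generators).  The scalar `t`
is the parameter used in the skew bicharacter `θ`: for the `n`-rank Taft algebra
`𝒜̄_q(n)` one takes `t = q`, while `t = 1` gives the presentation of the `n`-fold
tensor power of the Taft algebra (the rank-`n` Taft algebra `𝒜̄_q(1)^{⊗n}`). -/
structure TaftPresentation (k : Type*) [Field k] (A : Type*) [Ring A]
    [HopfAlgebra k A] (n ℓ : ℕ) (q t : k) where
  K : (Fin n → ℤ) → A
  x : Fin n → A
  K_zero : K 0 = 1
  K_add : ∀ α β, K α * K β = K (α + β)
  K_ell : ∀ i, K (epsZ i) ^ ℓ = 1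
  K_x : ∀ i j, K (epsZ i) * x j
      = (theta t (epsZ i) (epsZ j) * if i = j then q else 1) • (x j * K (epsZ i))
  x_x : ∀ i j, x i * x j = theta t (epsZ i) (epsZ j) • (x j * x i)
  x_ell : ∀ i, x i ^ ℓ = 0
  comul_K : ∀ α, Coalgebra.comul (R := k) (K α) = K α ⊗ₜ[k] K α
  comul_x : ∀ i, Coalgebra.comul (R := k) (x i) = x i ⊗ₜ[k] 1 + K (epsZ i) ⊗ₜ[k] x i
  counit_K : ∀ α, Coalgebra.counit (R := k) (K α) = 1
  counit_x : ∀ i, Coalgebra.counit (R := k) (x i) = 0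
  antipode_K : ∀ α, HopfAlgebra.antipode (R := k) (K α) = K (-α)
  antipode_x : ∀ i, HopfAlgebra.antipode (R := k) (x i) = -(K (-epsZ i) * x i)

namespace TaftPresentation

variable {k : Type*} [Field k] {A : Type*} [Ring A] [HopfAlgebra k A]
  {n ℓ : ℕ} {q t : k}

/-- The basis monomial `x^γ K(α)`. -/
def mono (T : TaftPresentation k A n ℓ q t) (γ α : Fin n → Fin ℓ) : A :=
  xpow T.x (fun i => (γ i : ℕ)) * T.K (fun i => (α i : ℤ))

end TaftPresentation

/-! The antipode is an anti-homomorphism, so `s(x^γ)` is the reversed product of the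
`s(x_i^{γ_i})`. Since `K(-ε_i) x_i = q⁻¹ x_i K(-ε_i)`, each `s(x_i^a)` is a scalar multiple of
`x_i^a K(-ε_i)^a`, and this element commutes with every `x_j`, `j < i`: the factors `q⁻¹` from
`K(-ε_i) x_j` and `q` from `x_i x_j` cancel. This restores the order of the monomial and collects
the `K`'s at the right. The square `s²` is multiplicative and `s²(x_i) = K(-ε_i) x_i K(ε_i) = q⁻¹ x_i`. -/

open HopfAlgebra

section QCommute

variable {R A : Type*} [CommSemiring R] [Semiring A] [Algebra R A] {a b : A} {c : R}

theorem pow_mul_eq_smul_of_mul_eq_smul (h : a * b = c • (b * a)) (m : ℕ) :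
    a ^ m * b = c ^ m • (b * a ^ m) := by
  induction m with
  | zero => simp
  | succ m ih =>
    rw [pow_succ, mul_assoc, h, mul_smul_comm, ← mul_assoc, ih, smul_mul_assoc, smul_smul,
      ← pow_succ', mul_assoc, ← pow_succ]

theorem mul_pow_eq_smul_of_mul_eq_smul (h : a * b = c • (b * a)) (m : ℕ) :
    (b * a) ^ m = c ^ m.choose 2 • (b ^ m * a ^ m) := by
  induction m with
  | zero => simp
  | succ m ih =>
    have hab : b ^ m * a ^ m * (b * a) = c ^ m • (b ^ (m + 1) * a ^ (m + 1)) := by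
      rw [mul_assoc, ← mul_assoc (a ^ m), pow_mul_eq_smul_of_mul_eq_smul h, smul_mul_assoc,
        mul_smul_comm, pow_succ, pow_succ]
      simp only [mul_assoc]
    have hchoose : (m + 1).choose 2 = m.choose 2 + m := by
      rw [Nat.choose_succ_succ', Nat.choose_one_right, add_comm]
    rw [pow_succ, ih, smul_mul_assoc, hab, smul_smul, ← pow_add, hchoose]

end QCommute

theorem inv_mul_eq_inv_smul_of_mul_eq_smul {k A : Type*} [Field k] [Ring A] [Algebra k A]
    {g g' x : A} {c : k} (hc : c ≠ 0) (hgg' : g * g' = 1) (hg'g : g' * g = 1)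
    (h : g * x = c • (x * g)) : g' * x = c⁻¹ • (x * g') := by
  have hxg : x * g = c⁻¹ • (g * x) := by rw [h, smul_smul, inv_mul_cancel₀ hc, one_smul]
  calc g' * x = g' * (x * g) * g' := by rw [mul_assoc, mul_assoc, hgg', mul_one]
    _ = c⁻¹ • (x * g') := by rw [hxg, mul_smul_comm, smul_mul_assoc, ← mul_assoc, hg'g, one_mul]

theorem List.prod_map_smul {ι R M : Type*} [CommMonoid R] [Monoid M] [MulAction R M]
    [IsScalarTower R M M] [SMulCommClass R M M] (c : ι → R) (f : ι → M) (l : List ι) :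
    (l.map fun i => c i • f i).prod = (l.map c).prod • (l.map f).prod := by
  induction l with
  | nil => simp
  | cons i l ih => simp [ih, smul_mul_smul_comm]

theorem List.prod_reverse_map_mul {ι M : Type*} [Monoid M] (a b : ι → M) {l : List ι}
    (hl : l.Pairwise fun j i => Commute (a i * b i) (a j)) :
    (l.reverse.map fun i => a i * b i).prod = (l.map a).prod * (l.reverse.map b).prod := by
  induction l using List.reverseRecOn with
  | nil => simp
  | append_singleton l i ih =>
    obtain ⟨hl, -, hi⟩ := List.pairwise_append.mp hl
    have hcomm : Commute (a i * b i) (l.map a).prod :=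
      Commute.list_prod_right _ _ fun y hy => by
        obtain ⟨j, hj, rfl⟩ := List.mem_map.mp hy
        exact hi j hj i (List.mem_singleton_self i)
    simp only [List.reverse_append, List.reverse_singleton, List.singleton_append, List.map_cons,
      List.prod_cons, List.map_append, List.prod_append, ih hl, ← mul_assoc, hcomm.eq]
    simp [mul_assoc]

namespace HopfAlgebra

variable {R A : Type*} [CommSemiring R] [Semiring A] [HopfAlgebra R A]

theorem antipode_list_prod (l : List A) :
    antipode R l.prod = (l.map (antipode R)).reverse.prod :=
  unop_map_list_prod (antipodeAlgHomOp R A) l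

theorem antipode_pow (a : A) (m : ℕ) : antipode R (a ^ m) = antipode R a ^ m := by
  simpa using congrArg MulOpposite.unop (map_pow (antipodeAlgHomOp R A) a m)

variable (R A) in
noncomputable def antipodeSq : A →ₐ[R] A :=
  AlgHom.ofLinearMap (antipode R ∘ₗ antipode R) (by simp)
    (fun a b => by simp [antipode_mul_antidistrib])

@[simp]
theorem antipodeSq_apply (a : A) : antipodeSq R A a = antipode R (antipode R a) := rfl

end HopfAlgebra

theorem starForm_epsZ {n : ℕ} (a b : Fin n) :
    starForm (epsZ a) (epsZ b) = if b < a then 1 else 0 := by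
  rw [starForm, Finset.sum_eq_single b, Finset.sum_eq_single a] <;> simp +contextual [epsZ]

theorem theta_epsZ_self {k : Type*} [Field k] (t : k) {n : ℕ} (i : Fin n) :
    theta t (epsZ i) (epsZ i) = 1 := by
  simp [theta]

theorem theta_epsZ_of_lt {k : Type*} [Field k] (t : k) {n : ℕ} {i j : Fin n} (h : j < i) :
    theta t (epsZ i) (epsZ j) = t := by
  simp [theta, starForm_epsZ, h, h.not_gt]

namespace TaftPresentation

variable {k : Type*} [Field k] {A : Type*} [Ring A] [HopfAlgebra k A] {n ℓ : ℕ} {q t : k}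
  (T : TaftPresentation k A n ℓ q t)

theorem K_mul_K_neg (α : Fin n → ℤ) : T.K α * T.K (-α) = 1 := by
  rw [T.K_add, add_neg_cancel, T.K_zero]

theorem K_neg_mul_K (α : Fin n → ℤ) : T.K (-α) * T.K α = 1 := by
  rw [T.K_add, neg_add_cancel, T.K_zero]

theorem K_nsmul (m : ℕ) (α : Fin n → ℤ) : T.K (m • α) = T.K α ^ m := by
  induction m with
  | zero => simp [T.K_zero]
  | succ m ih => rw [succ_nsmul, ← T.K_add, ih, pow_succ]

theorem K_list_sum (l : List (Fin n → ℤ)) : T.K l.sum = (l.map T.K).prod := by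
  induction l with
  | nil => exact T.K_zero
  | cons α l ih => rw [List.sum_cons, ← T.K_add, ih, List.map_cons, List.prod_cons]

theorem K_mul_x_self (i : Fin n) : T.K (epsZ i) * T.x i = q • (T.x i * T.K (epsZ i)) := by
  simp [T.K_x, theta_epsZ_self]

theorem K_mul_x_of_lt {i j : Fin n} (h : j < i) :
    T.K (epsZ i) * T.x j = t • (T.x j * T.K (epsZ i)) := by
  simp [T.K_x, theta_epsZ_of_lt t h, h.ne']

theorem K_neg_mul_x_self (hq : q ≠ 0) (i : Fin n) :
    T.K (-epsZ i) * T.x i = q⁻¹ • (T.x i * T.K (-epsZ i)) :=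
  inv_mul_eq_inv_smul_of_mul_eq_smul hq (T.K_mul_K_neg _) (T.K_neg_mul_K _) (T.K_mul_x_self i)

theorem K_neg_mul_x_of_lt (ht : t ≠ 0) {i j : Fin n} (h : j < i) :
    T.K (-epsZ i) * T.x j = t⁻¹ • (T.x j * T.K (-epsZ i)) :=
  inv_mul_eq_inv_smul_of_mul_eq_smul ht (T.K_mul_K_neg _) (T.K_neg_mul_K _) (T.K_mul_x_of_lt h)

theorem x_mul_x_of_lt {i j : Fin n} (h : j < i) : T.x i * T.x j = t • (T.x j * T.x i) := by
  rw [T.x_x, theta_epsZ_of_lt t h]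

theorem commute_x_pow_mul_K_neg_pow (ht : t ≠ 0) {i j : Fin n} (h : j < i) (m : ℕ) :
    Commute (T.x i ^ m * T.K (-epsZ i) ^ m) (T.x j) := by
  have hK := pow_mul_eq_smul_of_mul_eq_smul (T.K_neg_mul_x_of_lt ht h) m
  have hx := pow_mul_eq_smul_of_mul_eq_smul (T.x_mul_x_of_lt h) m
  calc T.x i ^ m * T.K (-epsZ i) ^ m * T.x j
      = (t⁻¹ ^ m * t ^ m) • (T.x j * (T.x i ^ m * T.K (-epsZ i) ^ m)) := by
        rw [mul_assoc, hK, mul_smul_comm, ← mul_assoc, hx, smul_mul_assoc, smul_smul, mul_assoc]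
    _ = T.x j * (T.x i ^ m * T.K (-epsZ i) ^ m) := by
        rw [← mul_pow, inv_mul_cancel₀ ht, one_pow, one_smul]

theorem antipode_x_pow (hq : q ≠ 0) (i : Fin n) (m : ℕ) :
    antipode k (T.x i ^ m)
      = ((-1) ^ m * q⁻¹ ^ (m + 1).choose 2) • (T.x i ^ m * T.K (-epsZ i) ^ m) := by
  have hchoose : (m + 1).choose 2 = m + m.choose 2 := by
    rw [Nat.choose_succ_succ', Nat.choose_one_right]
  rw [antipode_pow, T.antipode_x, T.K_neg_mul_x_self hq i, ← neg_smul, smul_pow,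
    mul_pow_eq_smul_of_mul_eq_smul (T.K_neg_mul_x_self hq i), smul_smul, neg_pow,
    hchoose, pow_add, mul_assoc]

theorem antipode_xpow (hq : q ≠ 0) (ht : t ≠ 0) (γ : Fin n → ℕ) :
    antipode k (xpow T.x γ)
      = (∏ i, (-1) ^ γ i * q⁻¹ ^ (γ i + 1).choose 2) •
          (xpow T.x γ * T.K (fun i => -(γ i : ℤ))) := by
  have hK : ((List.finRange n).reverse.map fun i => T.K (-epsZ i) ^ γ i).prod
      = T.K (fun i => -(γ i : ℤ)) := by
    have hsum : ((List.finRange n).map fun i => γ i • -epsZ i).sum = fun i => -(γ i : ℤ) := by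
      rw [← Fin.sum_univ_def]
      ext j
      simp [epsZ]
    rw [← hsum, ← List.sum_reverse, ← List.map_reverse, T.K_list_sum, List.map_map]
    simp only [Function.comp_def, T.K_nsmul]
  have hcomm : (List.finRange n).Pairwise fun j i =>
      Commute (T.x i ^ γ i * T.K (-epsZ i) ^ γ i) (T.x j ^ γ j) :=
    (List.pairwise_lt_finRange n).imp fun h => (T.commute_x_pow_mul_K_neg_pow ht h _).pow_right _
  rw [xpow, antipode_list_prod, List.map_map, ← List.map_reverse]
  simp_rw [Function.comp_def, T.antipode_x_pow hq]
  rw [List.prod_map_smul, List.prod_reverse_map_mul _ _ hcomm, hK, List.map_reverse,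
    List.prod_reverse, ← Fin.prod_univ_def]

theorem antipode_antipode_x (hq : q ≠ 0) (i : Fin n) :
    antipode k (antipode k (T.x i)) = q⁻¹ • T.x i := by
  rw [T.antipode_x, map_neg, antipode_mul_antidistrib, T.antipode_K, neg_neg, T.antipode_x,
    neg_mul, neg_neg, T.K_neg_mul_x_self hq i, smul_mul_assoc, mul_assoc, T.K_neg_mul_K,
    mul_one]

end TaftPresentation

section Monomial

variable {n : ℕ}

theorem map_xpow {A B F : Type*} [Ring A] [Ring B] [FunLike F A B] [MonoidHomClass F A B]
    (f : F) (x : Fin n → A) (γ : Fin n → ℕ) : f (xpow x γ) = xpow (fun i => f (x i)) γ := by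
  simp [xpow, map_list_prod, Function.comp_def]

theorem xpow_smul {R A : Type*} [CommSemiring R] [Ring A] [Algebra R A] (c : R)
    (x : Fin n → A) (γ : Fin n → ℕ) : xpow (fun i => c • x i) γ = c ^ (∑ i, γ i) • xpow x γ := by
  simp_rw [xpow, smul_pow]
  rw [List.prod_map_smul, ← Fin.prod_univ_def, Finset.prod_pow_eq_pow_sum]

end Monomial

theorem prod_neg_one_pow_mul_inv_pow_choose_two {k ι : Type*} [Field k] [Fintype ι] (q : k)
    (γ : ι → ℕ) :
    ∏ i, (-1) ^ γ i * q⁻¹ ^ (γ i + 1).choose 2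
      = (-1) ^ (∑ i, γ i) * q ^ (-((∑ i, (γ i : ℤ) * ((γ i : ℤ) + 1)) / 2)) := by
  have htwice : ∑ i, (γ i : ℤ) * ((γ i : ℤ) + 1) = 2 * ∑ i, ((γ i + 1).choose 2 : ℤ) := by
    rw [Finset.mul_sum]
    refine Finset.sum_congr rfl fun i _ => ?_
    have h := Nat.add_one_mul_choose_eq (γ i) 1
    rw [Nat.choose_one_right] at h
    zify at h
    linarith
  rw [Finset.prod_mul_distrib, Finset.prod_pow_eq_pow_sum, Finset.prod_pow_eq_pow_sum, htwice,
    Int.mul_ediv_cancel_left _ two_ne_zero, zpow_neg, inv_pow, ← Nat.cast_sum, zpow_natCast]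

theorem stmt4_general {k : Type*} [Field k]
    {A : Type*} [Ring A] [HopfAlgebra k A] {n ℓ : ℕ} {q : k}
    (hq : IsPrimitiveRoot q ℓ) (hℓ : 1 < ℓ)
    (T : TaftPresentation k A n ℓ q q)
    (γ : Fin n → ℕ) :
    HopfAlgebra.antipode (R := k) (xpow T.x γ)
        = ((-1 : k) ^ (∑ i, γ i) *
            q ^ (-((∑ i, (γ i : ℤ) * ((γ i : ℤ) + 1)) / 2)))
          • (xpow T.x γ * T.K (fun i => -(γ i : ℤ))) ∧
    HopfAlgebra.antipode (R := k) (HopfAlgebra.antipode (R := k) (xpow T.x γ))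
        = q ^ (-(∑ i, (γ i : ℤ))) • xpow T.x γ := by
  have hq₀ : q ≠ 0 := hq.ne_zero (by omega)
  constructor
  · rw [T.antipode_xpow hq₀ hq₀, prod_neg_one_pow_mul_inv_pow_choose_two]
  · rw [← antipodeSq_apply, map_xpow]
    simp_rw [antipodeSq_apply, T.antipode_antipode_x hq₀]
    rw [xpow_smul, zpow_neg, ← Nat.cast_sum, zpow_natCast, inv_pow]

/-- the antipode formula in the `n`-rank Taft algebra:
`s(x^γ) = (-1)^{|γ|} q^{-⟨γ,γ+𝟏⟩/2} x^γ K(-γ)` and `s²(x^γ) = q^{-|γ|} x^γ`. -/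
theorem stmt4 {k : Type*} [Field k] [CharZero k] [IsAlgClosed k]
    {A : Type*} [Ring A] [HopfAlgebra k A] {n ℓ : ℕ} {q : k}
    (hq : IsPrimitiveRoot q ℓ) (hℓ : 1 < ℓ)
    (T : TaftPresentation k A n ℓ q q)
    (γ : Fin n → ℕ) :
    HopfAlgebra.antipode (R := k) (xpow T.x γ)
        = ((-1 : k) ^ (∑ i, γ i) *
            q ^ (-((∑ i, (γ i : ℤ) * ((γ i : ℤ) + 1)) / 2)))
          • (xpow T.x γ * T.K (fun i => -(γ i : ℤ))) ∧
    HopfAlgebra.antipode (R := k) (HopfAlgebra.antipode (R := k) (xpow T.x γ))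
        = q ^ (-(∑ i, (γ i : ℤ))) • xpow T.x γ :=
  stmt4_general hq hℓ T γ
end

section
/- The element Γ = x^κ Σ_{α} θ(α,κ) q^{⟨α,κ⟩} K(α), where κ = (ℓ-1,…,ℓ-1) and the sum runs over all α with 0 ≤ α_i ≤ ℓ-1, is a nonzero left integral of the n-rank Taft algebra 𝒜̄_q(n); i.e. hΓ = ε(h)Γ for all h ∈ 𝒜̄_q(n). -/
/-! `Γ = x^κ S` with `S = Σ_β q^{c(β,κ)} K(β)`, where `c` is the bilinear form for which
`K(α) x^γ = q^{c(α,γ)} x^γ K(α)`. Each `x_i` kills `Γ`: it skew-commutes with every factor of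
`x^κ` until it meets `x_i^{ℓ-1}`, and `x_i^ℓ = 0`. Moving `K(α)` past `x^κ` produces `q^{c(α,κ)}`,
while `K(α) S = q^{-c(α,κ)} S` because `β ↦ q^{c(β,κ)} K(β)` is `ℓ`-periodic, so shifting the
summation index by `α` only permutes the terms of `S`. Thus the generators act on `Γ` through the
counit; the elements acting this way form a subalgebra, which contains the basis monomials and is
therefore everything. Finally `Γ ≠ 0` because its coefficients on the basis monomials `x^κ K(β)`
are nonzero. -/

open scoped TensorProduct

/-- The element `Γ = x^κ Σ_α θ(α,κ) q^{⟨α,κ⟩} K(α)`, `κ = (ℓ-1,…,ℓ-1)`. -/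
noncomputable def Gam {k : Type*} [Field k] {A : Type*} [Ring A] [HopfAlgebra k A]
    {n ℓ : ℕ} {q t : k} (T : TaftPresentation k A n ℓ q t) : A :=
  xpow T.x (fun _ => ℓ - 1) *
    ∑ α : Fin n → Fin ℓ,
      (theta t (fun i => ((α i : ℕ) : ℤ)) (fun _ => (ℓ : ℤ) - 1) *
        q ^ (∑ i, (α i : ℕ) * (ℓ - 1))) • T.K (fun i => ((α i : ℕ) : ℤ))

def starBilin (n : ℕ) : (Fin n → ℤ) →ₗ[ℤ] (Fin n → ℤ) →ₗ[ℤ] ℤ :=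
  Matrix.toLinearMap₂' ℤ (Matrix.of fun i j : Fin n => if j < i then 1 else 0)

lemma starBilin_apply {n : ℕ} (α β : Fin n → ℤ) : starBilin n α β = starForm α β := by
  rw [starBilin, Matrix.toLinearMap₂'_apply, starForm, Finset.sum_comm]
  simp

/-- The exponent in `K(α) x^γ = θ(α,γ) q^{⟨α,γ⟩} x^γ K(α)`. -/
def commForm (n : ℕ) : (Fin n → ℤ) →ₗ[ℤ] (Fin n → ℤ) →ₗ[ℤ] ℤ :=
  starBilin n - (starBilin n).flip + Matrix.toLinearMap₂' ℤ 1

lemma commForm_apply {n : ℕ} (α γ : Fin n → ℤ) :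
    commForm n α γ = starForm α γ - starForm γ α + α ⬝ᵥ γ := by
  simp [commForm, starBilin_apply, Matrix.toLinearMap₂'_apply']

lemma epsZ_eq_single {n : ℕ} (i : Fin n) : epsZ i = Pi.single i 1 := by
  ext j; simp [epsZ, Pi.single_apply]

lemma theta_mul_zpow_dotProduct {k : Type*} [Field k] {q : k} (hq : q ≠ 0) {n : ℕ}
    (α γ : Fin n → ℤ) : theta q α γ * q ^ (α ⬝ᵥ γ) = q ^ commForm n α γ := by
  rw [theta, ← zpow_add₀ hq, commForm_apply]

lemma sum_smul_epsZ {n : ℕ} (v : Fin n → ℤ) : ∑ i, v i • epsZ i = v := by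
  ext j; simp [epsZ]

lemma epsZ_induction {n : ℕ} {P : (Fin n → ℤ) → Prop} (zero : P 0)
    (add : ∀ u v, P u → P v → P (u + v)) (neg : ∀ u, P u → P (-u))
    (epsZ_mem : ∀ i, P (epsZ i)) (α : Fin n → ℤ) : P α := by
  have hα : α ∈ AddSubgroup.closure (Set.range epsZ) := by
    rw [← sum_smul_epsZ α]
    exact sum_mem fun i _ => zsmul_mem (AddSubgroup.subset_closure (Set.mem_range_self i)) _
  induction hα using AddSubgroup.closure_induction with
  | mem _ h => obtain ⟨i, rfl⟩ := h; exact epsZ_mem i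
  | zero => exact zero
  | add u v _ _ hu hv => exact add u v hu hv
  | neg u _ hu => exact neg u hu

section SkewCommute

variable {R A : Type*} [CommSemiring R] [Semiring A] [Algebra R A]

lemma mul_pow_eq_smul_pow_mul {a b : A} {r : R} (h : a * b = r • (b * a)) (m : ℕ) :
    a * b ^ m = r ^ m • (b ^ m * a) := by
  induction m with
  | zero => simp
  | succ m ih =>
    calc a * b ^ (m + 1) = r ^ m • (b ^ m * (a * b)) := by
          rw [pow_succ, ← mul_assoc, ih, smul_mul_assoc, mul_assoc]
      _ = r ^ (m + 1) • (b ^ (m + 1) * a) := by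
          rw [h, mul_smul_comm, smul_smul, ← pow_succ, ← mul_assoc, ← pow_succ]

lemma mul_list_prod_eq_smul {ι : Type*} {a : A} {b : ι → A} {r : ι → R} {L : List ι}
    (h : ∀ i ∈ L, a * b i = r i • (b i * a)) :
    a * (L.map b).prod = (L.map r).prod • ((L.map b).prod * a) := by
  induction L with
  | nil => simp
  | cons i L ih =>
    simp only [List.map_cons, List.prod_cons, List.forall_mem_cons] at h ⊢
    rw [← mul_assoc, h.1, smul_mul_assoc, mul_assoc, ih h.2, mul_smul_comm, smul_smul,
      mul_assoc]

lemma mul_list_prod_eq_zero {a : A} {L : List A} (hcomm : ∀ b ∈ L, ∃ r : R, a * b = r • (b * a))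
    (hzero : ∃ b ∈ L, a * b = 0) : a * L.prod = 0 := by
  induction L with
  | nil => simp at hzero
  | cons b L ih =>
    rw [List.prod_cons, ← mul_assoc]
    obtain ⟨c, hc, hac⟩ := hzero
    rcases List.mem_cons.mp hc with rfl | hc
    · rw [hac, zero_mul]
    · obtain ⟨r, hr⟩ := hcomm b List.mem_cons_self
      rw [hr, smul_mul_assoc, mul_assoc,
        ih (fun d hd => hcomm d (List.mem_cons_of_mem b hd)) ⟨c, hc, hac⟩, mul_zero, smul_zero]

end SkewCommute

lemma sum_add_cast_fin_of_periodic {M : Type*} [AddCommMonoid M] {n ℓ : ℕ} [NeZero ℓ]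
    {F : (Fin n → ℤ) → M} (hF : ∀ v w, F (v + (ℓ : ℤ) • w) = F v) (α : Fin n → Fin ℓ) :
    ∑ β : Fin n → Fin ℓ, F ((fun i => ((α i : ℕ) : ℤ)) + fun i => ((β i : ℕ) : ℤ))
      = ∑ β : Fin n → Fin ℓ, F (fun i => ((β i : ℕ) : ℤ)) := by
  rw [← Equiv.sum_comp (Equiv.addLeft α) fun β => F fun i => ((β i : ℕ) : ℤ)]
  refine Finset.sum_congr rfl fun β _ => ?_
  have hcarry : ((fun i => ((α i : ℕ) : ℤ)) + fun i => ((β i : ℕ) : ℤ))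
      = (fun i => (((α + β) i : ℕ) : ℤ)) + (ℓ : ℤ) • fun i => ((((α i : ℕ) + β i) / ℓ : ℕ) : ℤ) := by
    ext i
    have := Nat.mod_add_div ((α i : ℕ) + β i) ℓ
    simp only [Pi.add_apply, Pi.smul_apply, Fin.val_add, smul_eq_mul]
    exact_mod_cast this.symm
  rw [hcarry, hF]
  rfl

lemma zpow_sum_of_ne_zero {G ι : Type*} [CommGroupWithZero G] {g : G} (hg : g ≠ 0)
    (s : Finset ι) (e : ι → ℤ) : g ^ (∑ i ∈ s, e i) = ∏ i ∈ s, g ^ e i := by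
  induction s using Finset.cons_induction with
  | empty => simp
  | cons i s hi ih => rw [Finset.sum_cons, Finset.prod_cons, zpow_add₀ hg, ih]

namespace TaftPresentation

variable {k : Type*} [Field k] {A : Type*} [Ring A] [HopfAlgebra k A] {n ℓ : ℕ} {q t : k}

lemma K_neg_mul (T : TaftPresentation k A n ℓ q t) (u : Fin n → ℤ) : T.K (-u) * T.K u = 1 := by
  rw [T.K_add, neg_add_cancel, T.K_zero]

lemma K_mul_neg (T : TaftPresentation k A n ℓ q t) (u : Fin n → ℤ) : T.K u * T.K (-u) = 1 := by
  rw [T.K_add, add_neg_cancel, T.K_zero]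

lemma K_nsmul_s9 (T : TaftPresentation k A n ℓ q t) (u : Fin n → ℤ) (m : ℕ) :
    T.K ((m : ℤ) • u) = T.K u ^ m := by
  induction m with
  | zero => simp [T.K_zero]
  | succ m ih => rw [pow_succ, ← ih, T.K_add, Nat.cast_succ, add_smul, one_smul]

lemma K_ell_smul (T : TaftPresentation k A n ℓ q t) (w : Fin n → ℤ) : T.K ((ℓ : ℤ) • w) = 1 := by
  induction w using epsZ_induction with
  | zero => rw [smul_zero, T.K_zero]
  | add u v hu hv => rw [smul_add, ← T.K_add, hu, hv, one_mul]
  | neg u hu => rw [smul_neg, ← T.K_neg_mul ((ℓ : ℤ) • u), hu, mul_one]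
  | epsZ_mem i => rw [T.K_nsmul_s9, T.K_ell]

lemma K_add_ell_smul (T : TaftPresentation k A n ℓ q t) (v w : Fin n → ℤ) :
    T.K (v + (ℓ : ℤ) • w) = T.K v := by
  rw [← T.K_add, T.K_ell_smul, mul_one]

lemma x_mul_xpow_pred (T : TaftPresentation k A n ℓ q t) (hℓ : ℓ ≠ 0) (i : Fin n) :
    T.x i * xpow T.x (fun _ => ℓ - 1) = 0 := by
  refine mul_list_prod_eq_zero (R := k) ?_ ?_
  · simp only [List.forall_mem_map]
    exact fun j _ => ⟨_, mul_pow_eq_smul_pow_mul (T.x_x i j) _⟩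
  · refine ⟨T.x i ^ (ℓ - 1), List.mem_map_of_mem (List.mem_finRange i), ?_⟩
    rw [← pow_succ', Nat.sub_add_cancel (Nat.pos_of_ne_zero hℓ), T.x_ell]

lemma K_mul_x (T : TaftPresentation k A n ℓ q q) (hq : q ≠ 0) (α : Fin n → ℤ) (j : Fin n) :
    T.K α * T.x j = q ^ commForm n α (epsZ j) • (T.x j * T.K α) := by
  induction α using epsZ_induction generalizing j with
  | zero => simp [T.K_zero]
  | add u v hu hv =>
    rw [← T.K_add, mul_assoc, hv, mul_smul_comm, ← mul_assoc, hu, smul_mul_assoc, smul_smul,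
      mul_assoc, T.K_add, ← zpow_add₀ hq, map_add, LinearMap.add_apply, add_comm]
  | neg u hu =>
    have hx : T.x j * T.K u = (q ^ commForm n u (epsZ j))⁻¹ • (T.K u * T.x j) := by
      rw [hu, smul_smul, inv_mul_cancel₀ (zpow_ne_zero _ hq), one_smul]
    calc T.K (-u) * T.x j = T.K (-u) * (T.x j * T.K u) * T.K (-u) := by
          rw [mul_assoc (T.K (-u)), mul_assoc, T.K_mul_neg, mul_one]
      _ = q ^ commForm n (-u) (epsZ j) • (T.x j * T.K (-u)) := by
          rw [hx, mul_smul_comm, smul_mul_assoc, ← mul_assoc, T.K_neg_mul, one_mul, map_neg,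
            LinearMap.neg_apply, zpow_neg]
  | epsZ_mem i =>
    rw [T.K_x, ← theta_mul_zpow_dotProduct hq]
    congr 2
    by_cases h : i = j <;> simp [epsZ_eq_single, h]

end TaftPresentation

namespace TaftPresentation

variable {k : Type*} [Field k] {A : Type*} [Ring A] [HopfAlgebra k A] {n ℓ : ℕ} {q : k}

lemma K_mul_xpow (T : TaftPresentation k A n ℓ q q) (hq : q ≠ 0) (α : Fin n → ℤ)
    (γ : Fin n → ℕ) :
    T.K α * xpow T.x γ = q ^ commForm n α (fun i => γ i) • (xpow T.x γ * T.K α) := by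
  have hpow (j : Fin n) : T.K α * T.x j ^ γ j
      = q ^ ((γ j : ℤ) * commForm n α (epsZ j)) • (T.x j ^ γ j * T.K α) := by
    rw [mul_pow_eq_smul_pow_mul (T.K_mul_x hq α j), ← zpow_natCast, ← zpow_mul, mul_comm]
  rw [xpow, mul_list_prod_eq_smul fun j _ => hpow j, ← Fin.prod_univ_def,
    ← zpow_sum_of_ne_zero hq]
  congr 2
  conv_rhs => rw [← sum_smul_epsZ (fun i => (γ i : ℤ))]
  simp only [map_sum, map_zsmul, smul_eq_mul]

lemma Gam_eq (T : TaftPresentation k A n ℓ q q) (hq : q ≠ 0) (hℓ : ℓ ≠ 0) :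
    Gam T = xpow T.x (fun _ => ℓ - 1) * ∑ β : Fin n → Fin ℓ,
      q ^ commForm n (fun i => ((β i : ℕ) : ℤ)) (fun _ => ((ℓ - 1 : ℕ) : ℤ)) •
        T.K (fun i => ((β i : ℕ) : ℤ)) := by
  refine congrArg (_ * ·) (Finset.sum_congr rfl fun β _ => ?_)
  rw [← theta_mul_zpow_dotProduct hq, Nat.cast_pred (Nat.pos_of_ne_zero hℓ), ← zpow_natCast]
  push_cast [Nat.cast_pred (Nat.pos_of_ne_zero hℓ)]
  rfl

lemma K_mul_Gam (T : TaftPresentation k A n ℓ q q) (hq : IsPrimitiveRoot q ℓ) [NeZero ℓ]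
    (α : Fin n → Fin ℓ) : T.K (fun i => ((α i : ℕ) : ℤ)) * Gam T = Gam T := by
  have hq0 : q ≠ 0 := hq.ne_zero (NeZero.ne ℓ)
  set κ : Fin n → ℤ := fun _ => ((ℓ - 1 : ℕ) : ℤ)
  set a : Fin n → ℤ := fun i => ((α i : ℕ) : ℤ)
  set S := ∑ β : Fin n → Fin ℓ,
    q ^ commForm n (fun i => ((β i : ℕ) : ℤ)) κ • T.K (fun i => ((β i : ℕ) : ℤ))
  have hperiodic (v w : Fin n → ℤ) : q ^ commForm n (v + (ℓ : ℤ) • w) κ • T.K (v + (ℓ : ℤ) • w)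
      = q ^ commForm n v κ • T.K v := by
    rw [T.K_add_ell_smul, map_add, map_zsmul, LinearMap.add_apply, LinearMap.smul_apply,
      zpow_add₀ hq0, smul_eq_mul, zpow_mul, zpow_natCast, hq.pow_eq_one, one_zpow, mul_one]
  have hshift : T.K a * S = q ^ (-commForm n a κ) • S := by
    have hS := sum_add_cast_fin_of_periodic (F := fun v => q ^ commForm n v κ • T.K v) hperiodic α
    conv_rhs => rw [show S = _ from hS.symm]
    rw [Finset.mul_sum, Finset.smul_sum]
    refine Finset.sum_congr rfl fun β _ => ?_
    rw [mul_smul_comm, T.K_add, smul_smul, map_add, LinearMap.add_apply, ← zpow_add₀ hq0,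
      neg_add_cancel_left]
  rw [Gam_eq T hq0 (NeZero.ne ℓ), ← mul_assoc, T.K_mul_xpow hq0, smul_mul_assoc, mul_assoc,
    hshift, mul_smul_comm, smul_smul, ← zpow_add₀ hq0, add_neg_cancel, zpow_zero, one_smul]

variable {t : k}

lemma x_mul_Gam (T : TaftPresentation k A n ℓ q t) (hℓ : ℓ ≠ 0) (i : Fin n) :
    T.x i * Gam T = 0 := by
  rw [Gam, ← mul_assoc, T.x_mul_xpow_pred hℓ, zero_mul]

lemma Gam_ne_zero (T : TaftPresentation k A n ℓ q t) [NeZero ℓ] (hq : q ≠ 0) (ht : t ≠ 0)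
    (hli : LinearIndependent k fun p : (Fin n → Fin ℓ) × (Fin n → Fin ℓ) => T.mono p.1 p.2) :
    Gam T ≠ 0 := by
  let κ : Fin n → Fin ℓ := fun _ => ⟨ℓ - 1, Nat.sub_lt (NeZero.pos ℓ) one_pos⟩
  have hGam : Gam T = ∑ β : Fin n → Fin ℓ,
      (theta t (fun i => ((β i : ℕ) : ℤ)) (fun _ => (ℓ : ℤ) - 1) *
        q ^ (∑ i, (β i : ℕ) * (ℓ - 1))) • T.mono κ β := by
    rw [Gam, Finset.mul_sum]
    exact Finset.sum_congr rfl fun β _ => mul_smul_comm _ _ _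
  intro h0
  rw [hGam] at h0
  exact mul_ne_zero (zpow_ne_zero _ ht) (pow_ne_zero _ hq) <|
    Fintype.linearIndependent_iff.mp (hli.comp (Prod.mk κ) (Prod.mk_right_injective κ)) _ h0 0

lemma mono_mem (T : TaftPresentation k A n ℓ q t) {S : Subalgebra k A} (hx : ∀ i, T.x i ∈ S)
    (hK : ∀ α : Fin n → Fin ℓ, T.K (fun i => ((α i : ℕ) : ℤ)) ∈ S) (γ α : Fin n → Fin ℓ) :
    T.mono γ α ∈ S := by
  refine S.mul_mem (S.list_prod_mem ?_) (hK α)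
  simp only [List.forall_mem_map]
  exact fun i _ => S.pow_mem (hx i) _

end TaftPresentation

namespace Bialgebra

def counitStabilizer (R : Type*) {A : Type*} [CommSemiring R] [Semiring A] [Bialgebra R A]
    (Γ : A) : Subalgebra R A where
  carrier := {h | h * Γ = Coalgebra.counit (R := R) h • Γ}
  mul_mem' {a b} (ha : a * Γ = _) (hb : b * Γ = _) := show a * b * Γ = _ by
    rw [mul_assoc, hb, mul_smul_comm, ha, smul_smul, counit_mul, mul_comm]
  add_mem' {a b} (ha : a * Γ = _) (hb : b * Γ = _) := show (a + b) * Γ = _ by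
    rw [add_mul, ha, hb, map_add, add_smul]
  algebraMap_mem' r := show algebraMap R A r * Γ = _ by
    rw [counit_algebraMap, Algebra.smul_def]

lemma mem_counitStabilizer {R A : Type*} [CommSemiring R] [Semiring A] [Bialgebra R A]
    {Γ h : A} : h ∈ counitStabilizer R Γ ↔ h * Γ = Coalgebra.counit (R := R) h • Γ :=
  Iff.rfl

end Bialgebra

theorem stmt9_general {k : Type*} [Field k]
    {A : Type*} [Ring A] [HopfAlgebra k A] {n ℓ : ℕ} {q : k}
    (hq : IsPrimitiveRoot q ℓ) (hℓ : 1 < ℓ)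
    (T : TaftPresentation k A n ℓ q q)
    (b : Module.Basis ((Fin n → Fin ℓ) × (Fin n → Fin ℓ)) k A)
    (hb : ∀ p, b p = T.mono p.1 p.2) :
    Gam T ≠ 0 ∧ ∀ h : A, h * Gam T = Coalgebra.counit (R := k) h • Gam T := by
  have : NeZero ℓ := ⟨by omega⟩
  have hq0 : q ≠ 0 := hq.ne_zero (NeZero.ne ℓ)
  have hmono : ⇑b = fun p => T.mono p.1 p.2 := funext hb
  refine ⟨T.Gam_ne_zero hq0 hq0 (hmono ▸ b.linearIndependent), fun h => ?_⟩
  have hbasis : Set.range b ⊆ Bialgebra.counitStabilizer k (Gam T) := by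
    rintro _ ⟨p, rfl⟩
    rw [hb]
    refine T.mono_mem (fun i => ?_) (fun α => ?_) p.1 p.2
    · rw [Bialgebra.mem_counitStabilizer, T.x_mul_Gam (NeZero.ne ℓ), T.counit_x, zero_smul]
    · rw [Bialgebra.mem_counitStabilizer, T.K_mul_Gam hq, T.counit_K, one_smul]
  exact Bialgebra.mem_counitStabilizer.mp <|
    (Submodule.span_le (p := Subalgebra.toSubmodule (Bialgebra.counitStabilizer k (Gam T)))).mpr hbasis
      (b.mem_span h)

/-- `Γ` is a nonzero left integral of the `n`-rank Taft algebra. -/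
theorem stmt9 {k : Type*} [Field k] [CharZero k] [IsAlgClosed k]
    {A : Type*} [Ring A] [HopfAlgebra k A] {n ℓ : ℕ} {q : k}
    (hq : IsPrimitiveRoot q ℓ) (hℓ : 1 < ℓ)
    (T : TaftPresentation k A n ℓ q q)
    (b : Module.Basis ((Fin n → Fin ℓ) × (Fin n → Fin ℓ)) k A)
    (hb : ∀ p, b p = T.mono p.1 p.2) :
    Gam T ≠ 0 ∧ ∀ h : A, h * Gam T = Coalgebra.counit (R := k) h • Gam T :=
  stmt9_general hq hℓ T b hb
end

section
/- For the left integral Γ = x^κ Σ_α θ(α,κ) q^{⟨α,κ⟩} K(α) of the n-rank Taft algebra, one has Γ·h = χ̃(h)·Γ for all h, where χ̃ is the algebra homomorphism with χ̃(x^η K(β)) = δ_{η,0} θ(β,𝟏) q^{⟨β,𝟏⟩}; i.e., the distinguished group-like element of 𝒜̄_q(n)* is κ̃(𝟏). -/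
/-!
On the monomial basis it suffices to compute `Γ x_i` and `Γ K(α)`. Every `x_j` and every `K(β)`
skew-commutes with `x_i`, so `x_i` can be moved next to the factor `x_i ^ (ℓ - 1)` of `x^κ`,
and `Γ x_i = 0`. The coefficient of `K(β)` in `Γ` is `χ(β) ^ (ℓ - 1)`, where
`χ(β) = θ(β, 𝟏) q ^ ⟨β, 𝟏⟩` is a character of `(ℤ/ℓ)ⁿ` with values in the `ℓ`-th roots of unity;
shifting the summation index by `α` then gives `Γ K(α) = χ(α) Γ`.
-/

open scoped TensorProduct

/-- The distinguished group-like element `κ̃(𝟏)` of the dual, i.e. the linear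
functional with `χ̃(x^η K(β)) = δ_{η,0} θ(β,𝟏) q^{⟨β,𝟏⟩}` on the monomial basis. -/
noncomputable def chiTilde {k : Type*} [Field k] {A : Type*} [Ring A] [HopfAlgebra k A]
    {n ℓ : ℕ} {q t : k} (T : TaftPresentation k A n ℓ q t)
    (b : Module.Basis ((Fin n → Fin ℓ) × (Fin n → Fin ℓ)) k A) : A →ₗ[k] k :=
  b.constr k (fun p =>
    if ∀ i, (p.1 i : ℕ) = 0 then
      theta t (fun i => ((p.2 i : ℕ) : ℤ)) (fun _ => (1 : ℤ)) * q ^ (∑ i, (p.2 i : ℕ))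
    else 0)

section StarForm

variable {n : ℕ}

lemma starForm_add_left (u v w : Fin n → ℤ) :
    starForm (u + v) w = starForm u w + starForm v w := by
  simp only [starForm, ← Finset.sum_add_distrib, Pi.add_apply, add_mul, ite_add_ite, add_zero]

lemma starForm_add_right (u v w : Fin n → ℤ) :
    starForm w (u + v) = starForm w u + starForm w v := by
  simp only [starForm, ← Finset.sum_add_distrib, Pi.add_apply, mul_add, ite_add_ite, add_zero]

lemma starForm_const_left (c : ℤ) (v : Fin n → ℤ) :
    starForm (fun _ => c) v = starForm (fun _ => 1) v * c := by
  simp only [starForm, Finset.sum_mul, ite_mul, zero_mul, one_mul, mul_comm c]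

lemma starForm_const_right (c : ℤ) (v : Fin n → ℤ) :
    starForm v (fun _ => c) = starForm v (fun _ => 1) * c := by
  simp only [starForm, Finset.sum_mul, ite_mul, zero_mul, mul_one]

end StarForm

lemma zpow_pow_eq_one_of_pow_eq_one {G : Type*} [DivisionMonoid G] {a : G} {ℓ : ℕ}
    (h : a ^ ℓ = 1) (m : ℤ) : (a ^ m) ^ ℓ = 1 := by
  rw [← zpow_natCast, ← zpow_mul, mul_comm, zpow_mul, zpow_natCast, h, one_zpow]

section Theta

variable {k : Type*} [Field k] {n : ℕ}

lemma theta_zero_left (t : k) (w : Fin n → ℤ) : theta t 0 w = 1 := by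
  simp [theta, starForm]

lemma theta_add_left {t : k} (ht : t ≠ 0) (u v w : Fin n → ℤ) :
    theta t (u + v) w = theta t u w * theta t v w := by
  simp only [theta, starForm_add_left, starForm_add_right, ← zpow_add₀ ht]
  ring_nf

lemma theta_const_right (t : k) (v : Fin n → ℤ) (c : ℤ) :
    theta t v (fun _ => c) = theta t v (fun _ => 1) ^ c := by
  rw [theta, theta, starForm_const_left, starForm_const_right, ← sub_mul, zpow_mul]

lemma theta_pow_eq_one {t : k} {ℓ : ℕ} (ht : t ^ ℓ = 1) (v w : Fin n → ℤ) :
    theta t v w ^ ℓ = 1 :=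
  zpow_pow_eq_one_of_pow_eq_one ht _

end Theta

section ModularChar

variable {k : Type*} [Field k] {n : ℕ}

noncomputable def modularChar (t q : k) (v : Fin n → ℤ) : k :=
  theta t v (fun _ => 1) * q ^ ∑ i, v i

lemma modularChar_zero (t q : k) : modularChar t q (0 : Fin n → ℤ) = 1 := by
  simp [modularChar, theta_zero_left]

lemma modularChar_add {t q : k} (ht : t ≠ 0) (hq : q ≠ 0) (u v : Fin n → ℤ) :
    modularChar t q (u + v) = modularChar t q u * modularChar t q v := by
  simp only [modularChar, theta_add_left ht, Pi.add_apply, Finset.sum_add_distrib,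
    zpow_add₀ hq]
  ring

lemma modularChar_pow_eq_one {t q : k} {ℓ : ℕ} (ht : t ^ ℓ = 1) (hq : q ^ ℓ = 1)
    (v : Fin n → ℤ) : modularChar t q v ^ ℓ = 1 := by
  rw [modularChar, mul_pow, theta_pow_eq_one ht, zpow_pow_eq_one_of_pow_eq_one hq, one_mul]

lemma modularChar_natCast (t q : k) (v : Fin n → ℕ) :
    modularChar t q (fun i => (v i : ℤ)) =
      theta t (fun i => (v i : ℤ)) (fun _ => 1) * q ^ ∑ i, v i := by
  rw [modularChar, ← Nat.cast_sum, zpow_natCast]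

lemma theta_const_mul_pow_eq_modularChar_pow (t q : k) (v : Fin n → ℕ) (m : ℕ) :
    theta t (fun i => (v i : ℤ)) (fun _ => (m : ℤ)) * q ^ (∑ i, v i * m) =
      modularChar t q (fun i => (v i : ℤ)) ^ m := by
  rw [modularChar_natCast, mul_pow, theta_const_right, zpow_natCast, ← Finset.sum_mul, pow_mul]

end ModularChar

section PeriodicMap

variable {n : ℕ}

lemma natVec_induction {p : (Fin n → ℤ) → Prop} (zero : p 0)
    (add : ∀ u v, p u → p v → p (u + v)) (eps : ∀ i, p (epsZ i)) (w : Fin n → ℕ) :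
    p (fun i => (w i : ℤ)) := by
  have hw : (fun i => (w i : ℤ)) = ∑ i, w i • epsZ i := by
    ext j
    simp [epsZ, Finset.sum_apply]
  rw [hw]
  refine Finset.sum_induction _ p add zero fun i _ => ?_
  induction w i with
  | zero => simpa using zero
  | succ m ih => rw [succ_nsmul]; exact add _ _ ih (eps i)

variable {M : Type*} [Monoid M] {f : (Fin n → ℤ) → M}

lemma map_nsmul_eq_pow (h0 : f 0 = 1) (hadd : ∀ u v, f (u + v) = f u * f v) (m : ℕ)
    (v : Fin n → ℤ) : f (m • v) = f v ^ m := by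
  induction m with
  | zero => simpa using h0
  | succ m ih => rw [succ_nsmul, hadd, ih, pow_succ]

lemma map_val_add_eq_mul {ℓ : ℕ} [NeZero ℓ] (h0 : f 0 = 1)
    (hadd : ∀ u v, f (u + v) = f u * f v) (hper : ∀ i, f (epsZ i) ^ ℓ = 1)
    (β α : Fin n → Fin ℓ) :
    f (fun i => (((β + α) i : ℕ) : ℤ)) =
      f (fun i => ((β i : ℕ) : ℤ)) * f (fun i => ((α i : ℕ) : ℤ)) := by
  have hker : ∀ w : Fin n → ℕ, f ((ℓ : ℤ) • fun i => (w i : ℤ)) = 1 :=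
    natVec_induction (p := fun v => f ((ℓ : ℤ) • v) = 1) (by simpa using h0)
      (fun u v hu hv => by rw [smul_add, hadd, hu, hv, one_mul])
      (fun i => by rw [natCast_zsmul, map_nsmul_eq_pow h0 hadd, hper])
  have hsplit : (fun i => ((β i : ℕ) : ℤ)) + (fun i => ((α i : ℕ) : ℤ)) =
      (fun i => (((β + α) i : ℕ) : ℤ)) +
        (ℓ : ℤ) • fun i => ((((β i : ℕ) + α i) / ℓ : ℕ) : ℤ) := by
    funext i
    simp only [Pi.add_apply, Pi.smul_apply, Fin.val_add, smul_eq_mul]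
    exact_mod_cast (Nat.mod_add_div _ _).symm
  rw [← hadd, hsplit, hadd, hker, mul_one]

end PeriodicMap

def SkewCommute (R : Type*) {A : Type*} [CommSemiring R] [Semiring A] [Algebra R A]
    (a y : A) : Prop :=
  ∃ c : R, a * y = c • (y * a)

section SkewCommute

variable {R : Type*} [CommSemiring R] {A : Type*} [Semiring A] [Algebra R A]

namespace SkewCommute

variable {a b y : A}

lemma one_left (y : A) : SkewCommute R 1 y := ⟨1, by simp⟩

lemma mul_left (ha : SkewCommute R a y) (hb : SkewCommute R b y) : SkewCommute R (a * b) y := by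
  obtain ⟨c, hc⟩ := ha
  obtain ⟨d, hd⟩ := hb
  refine ⟨d * c, ?_⟩
  rw [mul_assoc, hd, mul_smul_comm, ← mul_assoc, hc, smul_mul_assoc, smul_smul, mul_assoc]

lemma pow_left (ha : SkewCommute R a y) (m : ℕ) : SkewCommute R (a ^ m) y := by
  induction m with
  | zero => simpa using one_left y
  | succ m ih => rw [pow_succ]; exact ih.mul_left ha

lemma list_prod_left {L : List A} (h : ∀ a ∈ L, SkewCommute R a y) :
    SkewCommute R L.prod y :=
  List.prod_induction _ (fun _ _ ha hb => ha.mul_left hb) (one_left y) h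

end SkewCommute

lemma list_prod_pow_mul_eq_zero {ι : Type*} {x : ι → A} {i : ι} {m : ℕ}
    (hcomm : ∀ j, SkewCommute R (x j) (x i)) (hnil : x i ^ (m + 1) = 0) {L : List ι}
    (hi : i ∈ L) : (L.map fun j => x j ^ m).prod * x i = 0 := by
  induction L with
  | nil => simp at hi
  | cons a L ih =>
    rw [List.map_cons, List.prod_cons, mul_assoc]
    rcases List.mem_cons.1 hi with rfl | hiL
    · obtain ⟨c, hc⟩ := SkewCommute.list_prod_left (R := R) (L := L.map fun j => x j ^ m)
        (by simpa using fun j _ => (hcomm j).pow_left m)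
      rw [hc, mul_smul_comm, ← mul_assoc, ← pow_succ, hnil, zero_mul, smul_zero]
    · rw [ih hiL, mul_zero]

end SkewCommute

lemma mul_list_prod_pow_eq_zero {A ι : Type*} [Semiring A] {a : A} {x : ι → A}
    (hx : ∀ j, a * x j = 0) (γ : ι → ℕ) {L : List ι} {i : ι} (hi : i ∈ L) (hγ : γ i ≠ 0) :
    a * (L.map fun j => x j ^ γ j).prod = 0 := by
  induction L with
  | nil => simp at hi
  | cons b L ih =>
    rw [List.map_cons, List.prod_cons]
    by_cases hb : γ b = 0
    · have hiL : i ∈ L := (List.mem_cons.1 hi).resolve_left fun h => hγ (h ▸ hb)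
      rw [hb, pow_zero, one_mul, ih hiL]
    · obtain ⟨m, hm⟩ := Nat.exists_eq_succ_of_ne_zero hb
      simp only [hm, pow_succ', ← mul_assoc, hx, zero_mul]

lemma xpow_zero {A : Type*} [Ring A] {n : ℕ} (x : Fin n → A) : xpow x 0 = 1 := by
  simp [xpow]

namespace TaftPresentation

variable {k : Type*} [Field k] {A : Type*} [Ring A] [HopfAlgebra k A] {n ℓ : ℕ} {q t : k}
  (T : TaftPresentation k A n ℓ q t)

lemma K_val_add [NeZero ℓ] (β α : Fin n → Fin ℓ) :
    T.K (fun i => (((β + α) i : ℕ) : ℤ)) =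
      T.K (fun i => ((β i : ℕ) : ℤ)) * T.K (fun i => ((α i : ℕ) : ℤ)) :=
  map_val_add_eq_mul T.K_zero (fun u v => (T.K_add u v).symm) T.K_ell β α

lemma skewCommute_K_x (w : Fin n → ℕ) (i : Fin n) :
    SkewCommute k (T.K fun j => (w j : ℤ)) (T.x i) :=
  natVec_induction (p := fun v => SkewCommute k (T.K v) (T.x i))
    (by simpa [T.K_zero] using SkewCommute.one_left (T.x i))
    (fun u v hu hv => by simpa [T.K_add] using hu.mul_left hv)
    (fun j => ⟨_, T.K_x j i⟩) w

lemma xpow_kappa_mul_x [NeZero ℓ] (i : Fin n) : xpow T.x (fun _ => ℓ - 1) * T.x i = 0 :=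
  list_prod_pow_mul_eq_zero (fun j => ⟨_, T.x_x j i⟩)
    (by rw [Nat.sub_add_cancel NeZero.one_le, T.x_ell]) (List.mem_finRange i)

end TaftPresentation

section Gam

variable {k : Type*} [Field k] {A : Type*} [Ring A] [HopfAlgebra k A] {n ℓ : ℕ} {q t : k}
  (T : TaftPresentation k A n ℓ q t)

lemma Gam_mul_x [NeZero ℓ] (i : Fin n) : Gam T * T.x i = 0 := by
  rw [Gam, mul_assoc, Finset.sum_mul, Finset.mul_sum]
  refine Finset.sum_eq_zero fun β _ => ?_
  obtain ⟨s, hs⟩ := T.skewCommute_K_x (fun j => (β j : ℕ)) i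
  rw [smul_mul_assoc, hs, mul_smul_comm, mul_smul_comm, ← mul_assoc, T.xpow_kappa_mul_x,
    zero_mul, smul_zero, smul_zero]

lemma Gam_mul_xpow [NeZero ℓ] (γ : Fin n → ℕ) {i : Fin n} (hi : γ i ≠ 0) :
    Gam T * xpow T.x γ = 0 :=
  mul_list_prod_pow_eq_zero (Gam_mul_x T) γ (List.mem_finRange i) hi

lemma Gam_coeff_eq_modularChar_pow [NeZero ℓ] (β : Fin n → Fin ℓ) :
    theta t (fun i => ((β i : ℕ) : ℤ)) (fun _ => (ℓ : ℤ) - 1) *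
        q ^ (∑ i, (β i : ℕ) * (ℓ - 1)) =
      modularChar t q (fun i => ((β i : ℕ) : ℤ)) ^ (ℓ - 1) := by
  rw [← theta_const_mul_pow_eq_modularChar_pow, Nat.cast_pred (Nat.pos_of_neZero ℓ)]

lemma Gam_mul_K [NeZero ℓ] (hq : q ^ ℓ = 1) (ht : t ^ ℓ = 1) (α : Fin n → Fin ℓ) :
    Gam T * T.K (fun i => ((α i : ℕ) : ℤ)) =
      modularChar t q (fun i => ((α i : ℕ) : ℤ)) • Gam T := by
  rw [Gam, mul_assoc, ← mul_smul_comm, Finset.sum_mul, Finset.smul_sum]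
  congr 1
  refine Fintype.sum_equiv (Equiv.addRight α) _ _ fun β => ?_
  simp only [Equiv.coe_addRight]
  rw [smul_mul_assoc, ← T.K_val_add, smul_smul, Gam_coeff_eq_modularChar_pow,
    Gam_coeff_eq_modularChar_pow]
  congr 1
  have hχ := map_val_add_eq_mul (modularChar_zero t q)
    (modularChar_add (IsUnit.of_pow_eq_one ht (NeZero.ne ℓ)).ne_zero
      (IsUnit.of_pow_eq_one hq (NeZero.ne ℓ)).ne_zero)
    (fun i => modularChar_pow_eq_one ht hq _) β α
  rw [hχ, mul_pow, mul_left_comm, ← pow_succ', Nat.sub_add_cancel NeZero.one_le,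
    modularChar_pow_eq_one ht hq, mul_one]

lemma Gam_mul_mono [NeZero ℓ] (hq : q ^ ℓ = 1) (ht : t ^ ℓ = 1) (γ α : Fin n → Fin ℓ) :
    Gam T * T.mono γ α =
      (if ∀ i, (γ i : ℕ) = 0 then modularChar t q (fun i => ((α i : ℕ) : ℤ)) else 0) •
        Gam T := by
  rw [TaftPresentation.mono, ← mul_assoc]
  split_ifs with hγ
  · rw [show (fun i => (γ i : ℕ)) = 0 from funext hγ, xpow_zero, mul_one, Gam_mul_K T hq ht]
  · obtain ⟨i, hi⟩ := not_forall.1 hγ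
    rw [Gam_mul_xpow T _ hi, zero_mul, zero_smul]

end Gam

theorem stmt10_general {k : Type*} [Field k]
    {A : Type*} [Ring A] [HopfAlgebra k A] {n ℓ : ℕ} {q : k}
    (hq : IsPrimitiveRoot q ℓ) (hℓ : 1 < ℓ)
    (T : TaftPresentation k A n ℓ q q)
    (b : Module.Basis ((Fin n → Fin ℓ) × (Fin n → Fin ℓ)) k A)
    (hb : ∀ p, b p = T.mono p.1 p.2) :
    ∀ h : A, Gam T * h = chiTilde T b h • Gam T := by
  have : NeZero ℓ := ⟨by omega⟩
  have hmul : LinearMap.mulLeft k (Gam T) = (chiTilde T b).smulRight (Gam T) := by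
    refine b.ext fun p => ?_
    rw [LinearMap.mulLeft_apply, LinearMap.smulRight_apply, chiTilde, Module.Basis.constr_basis,
      hb, Gam_mul_mono T hq.pow_eq_one hq.pow_eq_one, modularChar_natCast]
  exact LinearMap.congr_fun hmul

/-- `Γ h = χ̃(h) Γ` for all `h`, i.e. the distinguished group-like
element of `𝒜̄_q(n)*` is `κ̃(𝟏)`. -/
theorem stmt10 {k : Type*} [Field k] [CharZero k] [IsAlgClosed k]
    {A : Type*} [Ring A] [HopfAlgebra k A] {n ℓ : ℕ} {q : k}
    (hq : IsPrimitiveRoot q ℓ) (hℓ : 1 < ℓ)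
    (T : TaftPresentation k A n ℓ q q)
    (b : Module.Basis ((Fin n → Fin ℓ) × (Fin n → Fin ℓ)) k A)
    (hb : ∀ p, b p = T.mono p.1 p.2) :
    ∀ h : A, Gam T * h = chiTilde T b h • Gam T :=
  stmt10_general hq hℓ T b hb
end
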